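/- (Lemma 5.4, per homogeneous type.) Suppose 0 < ε < −μ/(d+1). Let i ∈ {1,…,ℓ} and s ∈ ℕ^ℓ be such that χ_i < Σ_{j=1}^ℓ s_j χ_j (a strict sub-resonance type, i.e., satisfying the sub-resonance relation but not the resonance relation), and let Q : E → E_i have homogeneous type s with ‖Q(v)‖ ≤ C for all v ∈ E with ‖v‖ ≤ 1. Then μ + (d+1)ε < 0, and for every w ∈ E' with ‖w‖ ≤ 1, ‖F_i(Q(F^{-1}(w)))‖ ≤ e^{μ + (d+1)ε} · C, a bound strictly smaller than C whenever C > 0. -/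

import Mathlib

/-- A map `R` from a product of real vector spaces to a real vector space has
homogeneous type `s = (s 0, …, s (ℓ-1))` if scaling the `j`-th component by `a j`
multiplies the value by `∏ j, (a j) ^ (s j)`. -/
def HomogType {ℓ : ℕ} {E : Fin ℓ → Type*} [∀ j, AddCommGroup (E j)] [∀ j, Module ℝ (E j)]
    {V : Type*} [AddCommGroup V] [Module ℝ V]
    (s : Fin ℓ → ℕ) (R : (∀ j, E j) → V) : Prop :=
  ∀ (a : Fin ℓ → ℝ) (w : ∀ j, E j), R (fun j => a j • w j) = (∏ j, a j ^ s j) • R w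

/-!
Write `w ∈ E'` with `‖w‖ ≤ 1` as `F (e^{ε - χ_j} v_j)_j`; the lower bounds on the `F_j` give
`‖v‖ ≤ 1`, so by homogeneity `‖Q(F⁻¹ w)‖ ≤ e^{Σ s_j (ε - χ_j)} C`, and applying `F_i` costs another
factor `e^{χ_i + ε}`. The resulting exponent is `(χ_i - Σ s_j χ_j) + (n + 1) ε` with `n = Σ s_j`.
Strict sub-resonance gives `χ_i - Σ s_j χ_j ≤ μ`, and `χ_1 ≤ χ_i < Σ s_j χ_j ≤ n χ_ℓ` gives
`n ≤ d`, so the exponent is at most `μ + (d + 1) ε < 0`.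
-/

open Finset

theorem PiLp.norm_le_norm_of_forall_norm_le {ι : Type*} [Fintype ι] {β γ : ι → Type*}
    [∀ j, SeminormedAddCommGroup (β j)] [∀ j, SeminormedAddCommGroup (γ j)]
    {x : PiLp 2 β} {y : PiLp 2 γ} (h : ∀ j, ‖x j‖ ≤ ‖y j‖) : ‖x‖ ≤ ‖y‖ := by
  rw [PiLp.norm_eq_of_L2, PiLp.norm_eq_of_L2]
  gcongr with j
  exact h j

theorem HomogType.apply_exp_smul {ℓ : ℕ} {E : Fin ℓ → Type*} [∀ j, AddCommGroup (E j)]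
    [∀ j, Module ℝ (E j)] {V : Type*} [AddCommGroup V] [Module ℝ V]
    {s : Fin ℓ → ℕ} {R : (∀ j, E j) → V} (hR : HomogType s R) (t : Fin ℓ → ℝ) (w : ∀ j, E j) :
    R (fun j => Real.exp (t j) • w j) = Real.exp (∑ j, (s j : ℝ) * t j) • R w := by
  simp only [hR _ w, Real.exp_sum, Real.exp_nat_mul]

theorem norm_conj_le_of_homogType {ℓ : ℕ} {E E' : Fin ℓ → Type*}
    [∀ j, NormedAddCommGroup (E j)] [∀ j, NormedSpace ℝ (E j)]
    [∀ j, NormedAddCommGroup (E' j)] [∀ j, NormedSpace ℝ (E' j)]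
    (χ : Fin ℓ → ℝ) (ε : ℝ) (F : ∀ j, E j ≃ₗ[ℝ] E' j)
    (hF : ∀ j, ∀ u : E j, Real.exp (χ j - ε) * ‖u‖ ≤ ‖F j u‖)
    {i : Fin ℓ} (hFi : ∀ u : E i, ‖F i u‖ ≤ Real.exp (χ i + ε) * ‖u‖)
    {s : Fin ℓ → ℕ} {Q : PiLp 2 E → E i} (hQ : HomogType s (fun v => Q (WithLp.toLp 2 v)))
    {C : ℝ} (hC : ∀ v : PiLp 2 E, ‖v‖ ≤ 1 → ‖Q v‖ ≤ C) {w : PiLp 2 E'} (hw : ‖w‖ ≤ 1) :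
    ‖F i (Q (WithLp.toLp 2 (fun j => (F j).symm (w j))))‖ ≤
      Real.exp ((χ i - ∑ j, (s j : ℝ) * χ j) + ((∑ j, (s j : ℝ)) + 1) * ε) * C := by
  set v : PiLp 2 E := WithLp.toLp 2 (fun j => Real.exp (χ j - ε) • (F j).symm (w j))
  have hv : ‖v‖ ≤ 1 := by
    refine (PiLp.norm_le_norm_of_forall_norm_le fun j => ?_).trans hw
    simpa [v, norm_smul, abs_of_pos (Real.exp_pos _)] using hF j ((F j).symm (w j))
  have hFw : (fun j => (F j).symm (w j)) = fun j => Real.exp (ε - χ j) • v j := by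
    funext j
    simp [v, smul_smul, ← Real.exp_add]
  have hexp : χ i + ε + ∑ j, (s j : ℝ) * (ε - χ j) =
      (χ i - ∑ j, (s j : ℝ) * χ j) + ((∑ j, (s j : ℝ)) + 1) * ε := by
    simp only [mul_sub, sum_sub_distrib, ← sum_mul]
    ring
  calc ‖F i (Q (WithLp.toLp 2 (fun j => (F j).symm (w j))))‖
      ≤ Real.exp (χ i + ε) * ‖Q (WithLp.toLp 2 (fun j => (F j).symm (w j)))‖ := hFi _
    _ = Real.exp (χ i + ε) * (Real.exp (∑ j, (s j : ℝ) * (ε - χ j)) * ‖Q v‖) := by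
        rw [hFw, hQ.apply_exp_smul, norm_smul, Real.norm_of_nonneg (Real.exp_pos _).le]
    _ ≤ Real.exp (χ i + ε) * (Real.exp (∑ j, (s j : ℝ) * (ε - χ j)) * C) := by
        gcongr
        exact hC v hv
    _ = Real.exp ((χ i - ∑ j, (s j : ℝ) * χ j) + ((∑ j, (s j : ℝ)) + 1) * ε) * C := by
        rw [← hexp, Real.exp_add (χ i + ε), mul_assoc]

theorem one_le_floor_div_of_le_of_neg {a b : ℝ} (hab : a ≤ b) (hb : b < 0) : 1 ≤ ⌊a / b⌋ := by
  rw [Int.le_floor, Int.cast_one, le_div_iff_of_neg hb, one_mul]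
  exact hab

theorem sum_le_floor_div_of_lt_sum_mul {ℓ : ℕ} {χ : Fin (ℓ + 1) → ℝ} (hχ : Monotone χ)
    (hlast : χ (Fin.last ℓ) < 0) {i : Fin (ℓ + 1)} {s : Fin (ℓ + 1) → ℕ}
    (hs : χ i < ∑ j, (s j : ℝ) * χ j) :
    ((∑ j, s j : ℕ) : ℤ) ≤ ⌊χ 0 / χ (Fin.last ℓ)⌋ := by
  have hsum : ∑ j, (s j : ℝ) * χ j ≤ (∑ j, (s j : ℝ)) * χ (Fin.last ℓ) := by
    rw [sum_mul]
    gcongr with j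
    exact hχ (Fin.le_last j)
  rw [Int.le_floor, le_div_iff_of_neg hlast]
  push_cast
  linarith [hχ (Fin.zero_le i)]

/-- Lemma 5.4 per homogeneous type: if `0 < ε < -μ/(d+1)` and `(i, s)` is a strict
sub-resonance type, then `μ + (d+1) ε < 0` and the conjugation `Fᵢ ∘ Q ∘ F⁻¹` of a map of
homogeneous type `s` bounded by `C` on the unit ball is bounded by `e^{μ + (d+1) ε} C < C`. -/
theorem inv_conj_contracts_strict_subresonance
    {ℓ : ℕ} (χ : Fin (ℓ + 1) → ℝ) (hmono : StrictMono χ) (hneg : ∀ j, χ j < 0)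
    (E E' : Fin (ℓ + 1) → Type*)
    [∀ j, NormedAddCommGroup (E j)] [∀ j, NormedSpace ℝ (E j)]
    [∀ j, NormedAddCommGroup (E' j)] [∀ j, NormedSpace ℝ (E' j)]
    (d : ℤ) (hd : d = ⌊χ 0 / χ (Fin.last ℓ)⌋)
    (μ : ℝ)
    (hμ : IsGreatest {x : ℝ | x < 0 ∧ ∃ (i : Fin (ℓ + 1)) (s : Fin (ℓ + 1) → ℕ),
      χ i ≤ ∑ j, (s j : ℝ) * χ j ∧ x = χ i - ∑ j, (s j : ℝ) * χ j} μ)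
    (ε : ℝ) (hε : 0 < ε) (hε' : ε < -μ / ((d : ℝ) + 1))
    (F : ∀ j, E j ≃ₗ[ℝ] E' j)
    (hF : ∀ j, ∀ u : E j,
      Real.exp (χ j - ε) * ‖u‖ ≤ ‖F j u‖ ∧ ‖F j u‖ ≤ Real.exp (χ j + ε) * ‖u‖)
    (i : Fin (ℓ + 1)) (s : Fin (ℓ + 1) → ℕ)
    (hss : χ i < ∑ j, (s j : ℝ) * χ j)
    (Q : PiLp 2 E → E i) (hQ : HomogType s (fun v => Q (WithLp.toLp 2 v)))
    (C : ℝ) (hC : ∀ v : PiLp 2 E, ‖v‖ ≤ 1 → ‖Q v‖ ≤ C) :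
    μ + ((d : ℝ) + 1) * ε < 0 ∧
      (∀ w : PiLp 2 E', ‖w‖ ≤ 1 →
        ‖F i (Q (WithLp.toLp 2 (fun j => (F j).symm (w j))))‖ ≤ Real.exp (μ + ((d : ℝ) + 1) * ε) * C) ∧
      (0 < C → Real.exp (μ + ((d : ℝ) + 1) * ε) * C < C) := by
  have hsub : χ i - ∑ j, (s j : ℝ) * χ j ≤ μ := hμ.2 ⟨sub_neg.mpr hss, i, s, hss.le, rfl⟩
  have hdeg : (∑ j, (s j : ℝ)) ≤ d := by
    exact_mod_cast hd ▸ sum_le_floor_div_of_lt_sum_mul hmono.monotone (hneg _) hss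
  have hd1 : (1 : ℝ) ≤ d := by
    exact_mod_cast hd ▸ one_le_floor_div_of_le_of_neg (hmono.monotone (Fin.zero_le _)) (hneg _)
  have hcontr : μ + ((d : ℝ) + 1) * ε < 0 := by
    linarith [(lt_div_iff₀ (by linarith : (0 : ℝ) < d + 1)).mp hε']
  have hC0 : 0 ≤ C := (norm_nonneg _).trans (hC 0 (norm_zero.trans_le zero_le_one))
  refine ⟨hcontr, fun w hw => ?_,
    fun hCpos => mul_lt_of_lt_one_left hCpos (Real.exp_lt_one_iff.mpr hcontr)⟩
  calc _ ≤ Real.exp ((χ i - ∑ j, (s j : ℝ) * χ j) + ((∑ j, (s j : ℝ)) + 1) * ε) * C :=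
        norm_conj_le_of_homogType χ ε F (fun j => (hF j · |>.1)) (hF i · |>.2) hQ hC hw
    _ ≤ Real.exp (μ + ((d : ℝ) + 1) * ε) * C := by gcongr
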